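/- arXiv:2211.11805 — 3 statements merged into one kernel-verified Lean document; each statement's English description precedes it below -/
import Mathlib

section
/- Let Ω be a smooth bounded domain of ℝⁿ and let u ∈ C¹(Ω̄) be positive in Ω and zero on ∂Ω. Assume the set K₀ = {x ∈ Ω : ∇u(x) = 0 and d(x, ∂Ω)·u(x)² ≥ 1} is nonempty and that the set of critical points of u is a compact subset of Ω. Then there exist N ∈ ℕ* and critical points x₁, …, x_N of u such that: (i) d(xᵢ, ∂Ω)·u(xᵢ)² ≥ 1 for all i; (ii) |xᵢ − xⱼ|·u(xᵢ)² ≥ 1 for all i ≠ j; (iii) for every critical point x of u with d(x, ∂Ω)·u(x)² ≥ 1 one has (min_{1≤i≤N} |xᵢ − x|)·u(x)² ≤ 1. -/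
open MeasureTheory Metric Real Filter
open scoped InnerProductSpace Topology ENNReal

noncomputable def lap {n : ℕ} (u : EuclideanSpace ℝ (Fin n) → ℝ)
    (x : EuclideanSpace ℝ (Fin n)) : ℝ :=
  ∑ i, fderiv ℝ (fun y => fderiv ℝ u y (EuclideanSpace.single i 1)) x (EuclideanSpace.single i 1)

abbrev E3 := EuclideanSpace ℝ (Fin 3)

/-- greedy selection of critical points (Lemma iso0). -/
theorem selection_of_critical_points {n : ℕ}
    (Ω : Set (EuclideanSpace ℝ (Fin n)))
    (hΩo : IsOpen Ω) (hΩb : Bornology.IsBounded Ω)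
    (u : EuclideanSpace ℝ (Fin n) → ℝ) (hu : ContDiff ℝ 1 u)
    (hpos : ∀ x ∈ Ω, 0 < u x) (hbd : ∀ x ∈ frontier Ω, u x = 0)
    (hK0 : ∃ x ∈ Ω, gradient u x = 0 ∧ 1 ≤ Metric.infDist x (frontier Ω) * (u x)^2)
    (hcpt : IsCompact {x ∈ Ω | gradient u x = 0}) :
    ∃ N : ℕ, 0 < N ∧ ∃ xs : Fin N → EuclideanSpace ℝ (Fin n),
      (∀ i, xs i ∈ Ω ∧ gradient u (xs i) = 0) ∧
      (∀ i, 1 ≤ Metric.infDist (xs i) (frontier Ω) * (u (xs i))^2) ∧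
      (∀ i j, i ≠ j → 1 ≤ ‖xs i - xs j‖ * (u (xs i))^2) ∧
      (∀ x ∈ Ω, gradient u x = 0 → 1 ≤ Metric.infDist x (frontier Ω) * (u x)^2 →
        ∃ i, ‖xs i - x‖ * (u x)^2 ≤ 1) := by
  classical
  set K : Set (EuclideanSpace ℝ (Fin n)) :=
    {x | x ∈ Ω ∧ gradient u x = 0 ∧ 1 ≤ Metric.infDist x (frontier Ω) * (u x)^2} with hKdef
  have hKc : IsCompact K := by
    have hEq : K = {x ∈ Ω | gradient u x = 0} ∩
        {x | 1 ≤ Metric.infDist x (frontier Ω) * (u x)^2} := by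
      ext x
      simp only [hKdef, Set.mem_setOf_eq, Set.mem_inter_iff, Set.mem_sep_iff]
      tauto
    rw [hEq]
    exact hcpt.inter_right (isClosed_le continuous_const
      ((continuous_infDist_pt _).mul ((hu.continuous).pow 2)))
  have hKne : K.Nonempty := by
    obtain ⟨x, hx, h1, h2⟩ := hK0
    exact ⟨x, hx, h1, h2⟩
  -- admissible sets
  set A : List (EuclideanSpace ℝ (Fin n)) → Set (EuclideanSpace ℝ (Fin n)) := fun L => {x | x ∈ K ∧ ∀ y ∈ L, 1 < ‖x - y‖ * (u x)^2} with hAdef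
  have hcont : ∀ y : EuclideanSpace ℝ (Fin n), Continuous (fun x => ‖x - y‖ * (u x)^2) :=
    fun y => ((continuous_id.sub continuous_const).norm).mul ((hu.continuous).pow 2)
  have hAsubK : ∀ L, A L ⊆ K := fun L x hx => hx.1
  have hCsubK : ∀ L, closure (A L) ⊆ K := fun L => closure_minimal (hAsubK L) hKc.isClosed
  have hCc : ∀ L, IsCompact (closure (A L)) :=
    fun L => hKc.of_isClosed_subset isClosed_closure (hCsubK L)
  have hCle : ∀ L, ∀ x ∈ closure (A L), ∀ y ∈ L, 1 ≤ ‖x - y‖ * (u x)^2 := by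
    intro L x hx y hy
    have hsub : closure (A L) ⊆ {z : EuclideanSpace ℝ (Fin n) | 1 ≤ ‖z - y‖ * (u z)^2} :=
      closure_minimal (fun z hz => le_of_lt (hz.2 y hy))
        (isClosed_le continuous_const (hcont y))
    exact hsub hx
  have hAmono : ∀ (L L' : List (EuclideanSpace ℝ (Fin n))), (∀ y ∈ L, y ∈ L') → A L' ⊆ A L :=
    fun L L' h x hx => ⟨hx.1, fun y hy => hx.2 y (h y hy)⟩
  -- choose a maximizer of u on closure (A L)
  have hstep : ∀ L, (A L).Nonempty → ∃ a ∈ closure (A L), ∀ z ∈ closure (A L), u z ≤ u a := by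
    intro L hL
    obtain ⟨a, ha, hmax⟩ := (hCc L).exists_isMaxOn hL.closure (hu.continuous.continuousOn)
    exact ⟨a, ha, fun z hz => by exact hmax hz⟩
  set seq : ℕ → List (EuclideanSpace ℝ (Fin n)) := fun k => Nat.rec []
    (fun _ L => if h : (A L).Nonempty then Classical.choose (hstep L h) :: L else L) k
    with hseqdef
  have hseq0 : seq 0 = [] := rfl
  have hseqS : ∀ k, seq (k+1) =
      if h : (A (seq k)).Nonempty then Classical.choose (hstep (seq k) h) :: seq k
      else seq k := fun k => rfl
  set R : EuclideanSpace ℝ (Fin n) → EuclideanSpace ℝ (Fin n) → Prop := fun a b => (1 ≤ ‖a - b‖ * (u a)^2) ∧ (1 ≤ ‖a - b‖ * (u b)^2)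
    with hRdef
  -- main invariant
  have hInv : ∀ k, (∀ x ∈ seq k, x ∈ K) ∧ (seq k).Pairwise R ∧
      (∀ z ∈ closure (A (seq k)), ∀ y ∈ seq k, u z ≤ u y) := by
    intro k
    induction k with
    | zero => simp [hseq0]
    | succ k ih =>
      obtain ⟨h1, h2, h3⟩ := ih
      rw [hseqS]
      split_ifs with h
      · set a := Classical.choose (hstep (seq k) h) with ha
        obtain ⟨haC, hamax⟩ := Classical.choose_spec (hstep (seq k) h)
        have haK : a ∈ K := hCsubK _ haC
        refine ⟨?_, ?_, ?_⟩
        · intro x hx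
          rcases List.mem_cons.mp hx with rfl | hx
          · exact haK
          · exact h1 x hx
        · refine List.pairwise_cons.mpr ⟨?_, h2⟩
          intro b hb
          have hab1 : 1 ≤ ‖a - b‖ * (u a)^2 := hCle _ a haC b hb
          have hua : u a ≤ u b := h3 a haC b hb
          have h0a : 0 < u a := hpos a haK.1
          refine ⟨hab1, le_trans hab1 ?_⟩
          have : (u a)^2 ≤ (u b)^2 := by nlinarith
          exact mul_le_mul_of_nonneg_left this (norm_nonneg _)
        · intro z hz y hy
          have hzC : z ∈ closure (A (seq k)) :=
            closure_mono (hAmono _ _ (fun y hy => List.mem_cons_of_mem _ hy)) hz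
          rcases List.mem_cons.mp hy with rfl | hy
          · exact hamax z hzC
          · exact h3 z hzC y hy
      · exact ⟨h1, h2, h3⟩
  -- termination
  have hterm : ∃ k, ¬ (A (seq k)).Nonempty := by
    by_contra hc
    push_neg at hc
    set x : ℕ → EuclideanSpace ℝ (Fin n) := fun k => Classical.choose (hstep (seq k) (hc k)) with hxdef
    have hx_cons : ∀ k, seq (k+1) = x k :: seq k := by
      intro k; rw [hseqS]; rw [dif_pos (hc k)]
    have hxC : ∀ k, x k ∈ closure (A (seq k)) :=
      fun k => (Classical.choose_spec (hstep (seq k) (hc k))).1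
    have hxmem : ∀ k m, k < m → x k ∈ seq m := by
      intro k m hkm
      induction m with
      | zero => omega
      | succ m ihm =>
        rw [hx_cons]
        rcases Nat.lt_succ_iff_lt_or_eq.mp hkm with h | h
        · exact List.mem_cons_of_mem _ (ihm h)
        · subst h; exact List.mem_cons_self
    have hxK : ∀ k, x k ∈ K := fun k => hCsubK _ (hxC k)
    have hu0 : 0 < u (x 0) := hpos _ (hxK 0).1
    set δ : ℝ := 1 / (u (x 0))^2 with hδdef
    have hδ0 : 0 < δ := by positivity
    have hdec : ∀ k, u (x k) ≤ u (x 0) := by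
      intro k
      cases k with
      | zero => exact le_refl _
      | succ k => exact (hInv (k+1)).2.2 _ (hxC (k+1)) _ (hxmem 0 (k+1) (Nat.succ_pos k))
    have hsep : ∀ i j, i < j → δ ≤ ‖x j - x i‖ := by
      intro i j hij
      have h1 : 1 ≤ ‖x j - x i‖ * (u (x j))^2 := hCle _ _ (hxC j) _ (hxmem i j hij)
      have h0j : 0 < u (x j) := hpos _ (hxK j).1
      have h2 : (u (x j))^2 ≤ (u (x 0))^2 := by nlinarith [hdec j]
      have h3 : 1 ≤ ‖x j - x i‖ * (u (x 0))^2 :=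
        le_trans h1 (mul_le_mul_of_nonneg_left h2 (norm_nonneg _))
      rw [hδdef, div_le_iff₀ (by positivity)]
      linarith
    obtain ⟨a, -, φ, hφ, hconv⟩ := hKc.tendsto_subseq hxK
    obtain ⟨M, hM⟩ := Metric.tendsto_atTop.mp hconv (δ/2) (by linarith)
    have h1 := hM M le_rfl
    have h2 := hM (M+1) (Nat.le_succ M)
    have hlt : φ M < φ (M+1) := hφ (Nat.lt_succ_self M)
    have := hsep (φ M) (φ (M+1)) hlt
    have hdist : dist (x (φ (M+1))) (x (φ M)) < δ := by
      calc dist (x (φ (M+1))) (x (φ M)) ≤ dist (x (φ (M+1))) a + dist a (x (φ M)) :=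
            dist_triangle _ _ _
        _ < δ/2 + δ/2 := by rw [dist_comm a]; exact add_lt_add h2 h1
        _ = δ := by ring
    rw [dist_eq_norm] at hdist
    linarith
  obtain ⟨k, hk⟩ := hterm
  have hLne : seq k ≠ [] := by
    intro hnil
    apply hk
    obtain ⟨z, hz⟩ := hKne
    exact ⟨z, by rw [hnil]; exact ⟨hz, by simp⟩⟩
  set L := seq k with hLdef
  obtain ⟨h1, h2, -⟩ := hInv k
  refine ⟨L.length, List.length_pos_iff.mpr hLne, fun i => L.get i, ?_, ?_, ?_, ?_⟩
  · intro i
    have := h1 _ (L.get_mem i)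
    exact ⟨this.1, this.2.1⟩
  · intro i
    exact (h1 _ (L.get_mem i)).2.2
  · intro i j hij
    rcases lt_or_gt_of_ne hij with h | h
    · exact (List.pairwise_iff_get.mp h2 i j h).1
    · have := (List.pairwise_iff_get.mp h2 j i h).2
      rwa [norm_sub_rev] at this
  · intro z hz hgrad hdist
    have hzK : z ∈ K := ⟨hz, hgrad, hdist⟩
    have hzA : z ∉ A L := fun hmem => hk ⟨z, hmem⟩
    have : ¬ ∀ y ∈ L, 1 < ‖z - y‖ * (u z)^2 := fun hall => hzA ⟨hzK, hall⟩
    push_neg at this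
    obtain ⟨y, hyL, hy⟩ := this
    obtain ⟨i, hi⟩ := List.get_of_mem hyL
    refine ⟨i, ?_⟩
    have hfin : ‖L.get i - z‖ * (u z)^2 ≤ 1 := by rw [hi, norm_sub_rev]; exact hy
    exact hfin
end

section
/- Let G : Ω ∖ {x₀} → (0,∞) be C² with −ΔG + hG = 0 on Ω ∖ {x₀}. For ε > 0 define U_ε = ε^{1/2}(ε² + G^{−2})^{−1/2} = ε^{−1/2} U(εG), where U(r) = r(1+r²)^{−1/2}. Then U_ε satisfies the exact equation −ΔU_ε + h U_ε = 3 U_ε⁵ |∇(G^{−1})|² + h ε U_ε³ on Ω ∖ {x₀}. -/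
open MeasureTheory Metric Real Filter
open scoped InnerProductSpace Topology ENNReal

private lemma phi_hasDerivAt {ε : ℝ} (hε : 0 < ε) {t : ℝ} (ht : 0 < t) :
    HasDerivAt (fun t : ℝ => Real.sqrt ε * (ε^2 + (t⁻¹)^2) ^ (-(1/2) : ℝ))
      (Real.sqrt ε * ((t⁻¹)^3 * (ε^2 + (t⁻¹)^2) ^ (-(3/2) : ℝ))) t := by
  have hb : 0 < ε^2 + (t⁻¹)^2 := by positivity
  have h1 : HasDerivAt (fun t : ℝ => ε^2 + (t⁻¹)^2)
      ((2:ℕ) * (t⁻¹)^1 * (-(t^2)⁻¹)) t :=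
    ((hasDerivAt_inv ht.ne').pow 2).const_add (ε^2)
  have h2 : HasDerivAt (fun b : ℝ => b ^ (-(1/2):ℝ))
      (-(1/2) * (ε^2 + (t⁻¹)^2) ^ ((-(1/2):ℝ) - 1)) (ε^2 + (t⁻¹)^2) :=
    Real.hasDerivAt_rpow_const (Or.inl hb.ne')
  have h3 := (h2.comp t h1).const_mul (Real.sqrt ε)
  refine h3.congr_deriv ?_
  rw [show ((-(1/2):ℝ) - 1) = -(3/2) by norm_num, ← inv_pow]
  push_cast
  ring

private lemma phi'_hasDerivAt {ε : ℝ} (hε : 0 < ε) {t : ℝ} (ht : 0 < t) :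
    HasDerivAt (fun t : ℝ => Real.sqrt ε * ((t⁻¹)^3 * (ε^2 + (t⁻¹)^2) ^ (-(3/2) : ℝ)))
      (Real.sqrt ε * (-3 * (t⁻¹)^4 * (ε^2 + (t⁻¹)^2) ^ (-(3/2) : ℝ)
        + 3 * (t⁻¹)^6 * (ε^2 + (t⁻¹)^2) ^ (-(5/2) : ℝ))) t := by
  have hb : 0 < ε^2 + (t⁻¹)^2 := by positivity
  have h1 : HasDerivAt (fun t : ℝ => ε^2 + (t⁻¹)^2)
      ((2:ℕ) * (t⁻¹)^1 * (-(t^2)⁻¹)) t :=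
    ((hasDerivAt_inv ht.ne').pow 2).const_add (ε^2)
  have h2 : HasDerivAt (fun b : ℝ => b ^ (-(3/2):ℝ))
      (-(3/2) * (ε^2 + (t⁻¹)^2) ^ ((-(3/2):ℝ) - 1)) (ε^2 + (t⁻¹)^2) :=
    Real.hasDerivAt_rpow_const (Or.inl hb.ne')
  have h3 := h2.comp t h1
  have h4 : HasDerivAt (fun t : ℝ => (t⁻¹)^3)
      ((3:ℕ) * (t⁻¹)^2 * (-(t^2)⁻¹)) t := (hasDerivAt_inv ht.ne').pow 3
  have h5 := (h4.mul h3).const_mul (Real.sqrt ε)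
  refine h5.congr_deriv ?_
  simp only [Function.comp_apply]
  rw [show ((-(3/2):ℝ) - 1) = -(5/2) by norm_num, ← inv_pow]
  push_cast
  ring

/-- exact equation satisfied by the glued bubble U_ε = ε^{1/2}(ε²+G⁻²)^{-1/2}. -/
theorem bubble_on_green_function_equation
    (Ω : Set E3) (hΩo : IsOpen Ω) (x₀ : E3) (hx₀ : x₀ ∈ Ω)
    (h : E3 → ℝ) (hh : ContinuousOn h Ω)
    (G : E3 → ℝ) (hG2 : ContDiffOn ℝ 2 G (Ω \ {x₀}))
    (hGpos : ∀ x ∈ Ω \ {x₀}, 0 < G x)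
    (hGeq : ∀ x ∈ Ω \ {x₀}, -lap G x + h x * G x = 0)
    (ε : ℝ) (hε : 0 < ε) :
    ∀ x ∈ Ω \ {x₀},
      -lap (fun y => Real.sqrt ε * (ε^2 + ((G y)⁻¹)^2) ^ (-(1/2) : ℝ)) x
        + h x * (Real.sqrt ε * (ε^2 + ((G x)⁻¹)^2) ^ (-(1/2) : ℝ))
      = 3 * (Real.sqrt ε * (ε^2 + ((G x)⁻¹)^2) ^ (-(1/2) : ℝ))^5
            * ‖gradient (fun y => (G y)⁻¹) x‖^2
        + h x * ε * (Real.sqrt ε * (ε^2 + ((G x)⁻¹)^2) ^ (-(1/2) : ℝ))^3 := by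
  intro x hx
  have hso : IsOpen (Ω \ {x₀}) := hΩo.sdiff isClosed_singleton
  have hsx : Ω \ {x₀} ∈ 𝓝 x := hso.mem_nhds hx
  have ht : 0 < G x := hGpos x hx
  set t := G x with htdef
  -- differentiability of G
  have hGd : ∀ y ∈ Ω \ {x₀}, HasFDerivAt G (fderiv ℝ G y) y := fun y hy =>
    ((hG2.contDiffAt (hso.mem_nhds hy)).differentiableAt (by norm_num)).hasFDerivAt
  -- φ' as a function of the scalar argument
  set φ' : ℝ → ℝ := fun a => Real.sqrt ε * ((a⁻¹)^3 * (ε^2 + (a⁻¹)^2) ^ (-(3/2) : ℝ)) with hφ'def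
  set φ'' : ℝ → ℝ := fun a => Real.sqrt ε * (-3 * (a⁻¹)^4 * (ε^2 + (a⁻¹)^2) ^ (-(3/2) : ℝ)
        + 3 * (a⁻¹)^6 * (ε^2 + (a⁻¹)^2) ^ (-(5/2) : ℝ)) with hφ''def
  -- first derivative of u everywhere on the open set
  have hud : ∀ y ∈ Ω \ {x₀},
      HasFDerivAt (fun z => Real.sqrt ε * (ε^2 + ((G z)⁻¹)^2) ^ (-(1/2) : ℝ))
        (φ' (G y) • fderiv ℝ G y) y := fun y hy => by
    exact (phi_hasDerivAt hε (hGpos y hy)).comp_hasFDerivAt y (hGd y hy)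
  -- second derivative machinery
  have hD : HasFDerivAt (fderiv ℝ G) (fderiv ℝ (fderiv ℝ G) x) x :=
    (((hG2.contDiffAt hsx).fderiv_right (m := 1) one_add_one_eq_two.le).differentiableAt one_ne_zero).hasFDerivAt
  set D := fderiv ℝ (fderiv ℝ G) x with hDdef
  have hEval : ∀ i : Fin 3, HasFDerivAt (fun y => fderiv ℝ G y (EuclideanSpace.single i 1))
      ((ContinuousLinearMap.apply ℝ ℝ (EuclideanSpace.single i 1)).comp D) x := by
    intro i
    have h0 : HasFDerivAt (⇑(ContinuousLinearMap.apply ℝ ℝ (EuclideanSpace.single i 1)) ∘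
        (fderiv ℝ G)) ((ContinuousLinearMap.apply ℝ ℝ (EuclideanSpace.single i 1)).comp D) x :=
      (ContinuousLinearMap.apply ℝ ℝ (EuclideanSpace.single i 1)).hasFDerivAt.comp x hD
    exact h0
  have hφ'G : HasFDerivAt (fun y => φ' (G y)) (φ'' t • fderiv ℝ G x) x := by
    exact (phi'_hasDerivAt hε ht).comp_hasFDerivAt x (hGd x hx)
  have hev : ∀ i : Fin 3,
      (fun y => fderiv ℝ (fun z => Real.sqrt ε * (ε^2 + ((G z)⁻¹)^2) ^ (-(1/2) : ℝ)) y
        (EuclideanSpace.single i 1))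
      =ᶠ[𝓝 x] fun y => φ' (G y) * fderiv ℝ G y (EuclideanSpace.single i 1) := by
    intro i
    filter_upwards [hsx] with y hy
    rw [(hud y hy).fderiv]
    simp
  have hterm : ∀ i : Fin 3,
      fderiv ℝ (fun y => fderiv ℝ (fun z => Real.sqrt ε * (ε^2 + ((G z)⁻¹)^2) ^ (-(1/2) : ℝ)) y
          (EuclideanSpace.single i 1)) x (EuclideanSpace.single i 1)
      = φ'' t * (fderiv ℝ G x (EuclideanSpace.single i 1))^2
        + φ' t * fderiv ℝ (fun y => fderiv ℝ G y (EuclideanSpace.single i 1)) x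
            (EuclideanSpace.single i 1) := by
    intro i
    rw [(hev i).fderiv_eq, (show HasFDerivAt (fun y => φ' (G y) * fderiv ℝ G y (EuclideanSpace.single i 1)) _ x
      from hφ'G.mul (hEval i)).fderiv, (hEval i).fderiv]
    simp only [ContinuousLinearMap.add_apply, ContinuousLinearMap.coe_smul',
      Pi.smul_apply, ContinuousLinearMap.coe_comp', Function.comp_apply,
      ContinuousLinearMap.apply_apply, smul_eq_mul]
    ring
  set S := ∑ i : Fin 3, (fderiv ℝ G x (EuclideanSpace.single i 1))^2 with hSdef
  have hlapu : lap (fun z => Real.sqrt ε * (ε^2 + ((G z)⁻¹)^2) ^ (-(1/2) : ℝ)) x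
      = φ'' t * S + φ' t * lap G x := by
    unfold lap
    rw [Finset.sum_congr rfl (fun i _ => hterm i), Finset.sum_add_distrib, hSdef,
      ← Finset.mul_sum, ← Finset.mul_sum]
  -- laplacian of G
  have hlapG : lap G x = h x * t := by have := hGeq x hx; linarith
  -- gradient of G⁻¹
  have hinv : HasFDerivAt (fun y => (G y)⁻¹) ((-(t^2)⁻¹) • fderiv ℝ G x) x := by
    exact (hasDerivAt_inv ht.ne').comp_hasFDerivAt x (hGd x hx)
  set w := gradient (fun y => (G y)⁻¹) x with hwdef
  have hwi : ∀ i : Fin 3, w i = -(t^2)⁻¹ * fderiv ℝ G x (EuclideanSpace.single i 1) := by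
    intro i
    have h1 : (inner ℝ w (EuclideanSpace.single i (1:ℝ)) : ℝ)
        = fderiv ℝ (fun y => (G y)⁻¹) x (EuclideanSpace.single i 1) := by
      rw [hwdef]
      exact InnerProductSpace.toDual_symm_apply
    rw [hinv.fderiv] at h1
    simpa [EuclideanSpace.inner_single_right, real_inner_comm] using h1
  have hnw : ‖w‖^2 = (t⁻¹)^4 * S := by
    have h0 : ‖w‖^2 = ∑ i : Fin 3, (w i)^2 := by
      rw [EuclideanSpace.norm_eq, Real.sq_sqrt (by positivity)]
      simp [Real.norm_eq_abs, sq_abs]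
    rw [h0, hSdef, Finset.mul_sum]
    refine Finset.sum_congr rfl fun i _ => ?_
    rw [hwi i]
    ring
  rw [hlapu, hlapG, hnw]
  -- scalar identities
  have hb : 0 < ε^2 + (t⁻¹)^2 := by positivity
  have he : Real.sqrt ε ^ 2 = ε := Real.sq_sqrt hε.le
  have htr : t * t⁻¹ = 1 := mul_inv_cancel₀ ht.ne'
  set c : ℝ := (ε^2 + (t⁻¹)^2) ^ (-(1/2) : ℝ) with hcdef
  have hc2 : c^2 * (ε^2 + (t⁻¹)^2) = 1 := by
    have hcc : c^2 = (ε^2 + (t⁻¹)^2)⁻¹ := by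
      rw [hcdef, ← Real.rpow_natCast _ 2, ← Real.rpow_mul hb.le]
      norm_num [Real.rpow_neg_one]
    rw [hcc, inv_mul_cancel₀ hb.ne']
  have hc3 : (ε^2 + (t⁻¹)^2) ^ (-(3/2) : ℝ) = c^3 := by
    rw [hcdef, ← Real.rpow_natCast _ 3, ← Real.rpow_mul hb.le]
    norm_num
  have hc5 : (ε^2 + (t⁻¹)^2) ^ (-(5/2) : ℝ) = c^5 := by
    rw [hcdef, ← Real.rpow_natCast _ 5, ← Real.rpow_mul hb.le]
    norm_num
  have idA : -(φ'' t) = 3 * (Real.sqrt ε * c)^5 * (t⁻¹)^4 := by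
    rw [hφ''def]
    simp only [hc3, hc5]
    linear_combination (-(3*Real.sqrt ε*(t⁻¹)^4*c^3)) * hc2
      + (-(3*Real.sqrt ε*(t⁻¹)^4*c^5*(Real.sqrt ε^2+ε))) * he
  have idB : Real.sqrt ε * c - t * φ' t = ε * (Real.sqrt ε * c)^3 := by
    rw [hφ'def]
    simp only [hc3]
    linear_combination (-(Real.sqrt ε*(t⁻¹)^2*c^3)) * htr + (-(Real.sqrt ε*c)) * hc2
      + (-(Real.sqrt ε*ε*c^3)) * he
  linear_combination S * idA + h x * idB
end

section
/- Let δ ∈ (0,1) and let f_ε(r) = ε⁶ r⁵ (ε² + r²)^{−6} (1 − ln(ε² + r²)/ln(ε²))³ for r ∈ (0,1). Then ∫₀¹ f_ε(r) dr = O((ln(1/ε²))^{−3}) as ε → 0; equivalently, after the change of variables r = εs, ∫₀^{1/ε} s⁵(1+s²)^{−6} (ln(1+s²))³ ds is bounded uniformly in ε, so the original integral is ≤ C / (ln(1/ε²))³. -/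
open MeasureTheory Metric Real Filter
open scoped InnerProductSpace Topology ENNReal

-- pointwise bound
lemma ptwise {ε r : ℝ} (hε : 0 < ε) (hr : 0 ≤ r) :
    ε^6 * r^5 * (((ε^2 + r^2)^6)⁻¹) * (Real.log ((ε^2 + r^2)/ε^2))^3
      ≤ 8 * ε / (ε^2 + r^2) := by
  set t := ε^2 + r^2 with ht_def
  have ht : 0 < t := by positivity
  set a := Real.sqrt t with ha_def
  have ha2 : a^2 = t := Real.sq_sqrt ht.le
  have ha0 : 0 < a := Real.sqrt_pos.2 ht
  have hra : r ≤ a := by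
    nlinarith [sq_nonneg (r - a)]
  have hε2t : ε^2 ≤ t := by nlinarith
  set L := Real.log (t/ε^2) with hL_def
  have hL0 : 0 ≤ L := Real.log_nonneg (by rw [le_div_iff₀ (by positivity)]; nlinarith)
  have hLa : ε * L ≤ 2 * a := by
    have h1 : t/ε^2 = (a/ε)^2 := by rw [div_pow, ha2]
    have h2 : L = 2 * Real.log (a/ε) := by
      rw [hL_def, h1, Real.log_pow (a/ε) 2]; norm_num
    have h3 : Real.log (a/ε) ≤ a/ε - 1 := Real.log_le_sub_one_of_pos (by positivity)
    have h4 : ε * (a/ε) = a := mul_div_cancel₀ a hε.ne'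
    nlinarith [mul_le_mul_of_nonneg_left h3 hε.le]
  have hnum : ε^6 * r^5 * L^3 ≤ 8 * ε * t^5 := by
    have c1 : ε^6 * r^5 * L^3 = ε^3 * (r^5 * (ε*L)^3) := by ring
    have c2 : r^5 * (ε*L)^3 ≤ a^5 * (2*a)^3 := by
      gcongr <;> positivity
    have c3 : a^5 * (2*a)^3 = 8 * (a^2)^4 := by ring
    have : ε^3 * (8 * (a^2)^4) = 8 * ε^3 * t^4 := by rw [ha2]; ring
    nlinarith [pow_pos ht 4, mul_le_mul_of_nonneg_left hε2t (by positivity : (0:ℝ) ≤ ε * t^4),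
      mul_le_mul_of_nonneg_left c2 (by positivity : (0:ℝ) ≤ ε^3)]
  have h6 : (0:ℝ) < t^6 := by positivity
  calc ε^6 * r^5 * ((t^6)⁻¹) * L^3 = (ε^6 * r^5 * L^3) / t^6 := by ring
    _ ≤ (8 * ε * t^5) / t^6 := by gcongr
    _ = 8 * ε / t := by field_simp

lemma intbound {ε b : ℝ} (hε : 0 < ε) (hb : 0 ≤ b) :
    (∫ r in Set.Ioo (0:ℝ) b, 8 * ε / (ε^2 + r^2)) ≤ 4 * π := by
  have h0 : (∫ r in Set.Ioo (0:ℝ) b, 8 * ε / (ε^2 + r^2))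
      = ∫ r in (0:ℝ)..b, 8 * ε / (ε^2 + r^2) := by
    rw [intervalIntegral.integral_of_le hb, integral_Ioc_eq_integral_Ioo]
  have h1 : ∀ r : ℝ, 8 * ε / (ε^2 + r^2) = (8 * ε⁻¹) * ((1:ℝ) + (r/ε)^2)⁻¹ := by
    intro r
    have : (0:ℝ) < ε^2 + r^2 := by positivity
    field_simp
  have h2 : (∫ x in (0:ℝ)..b, ((1:ℝ) + (x/ε)^2)⁻¹)
      = ε • ∫ x in (0/ε)..(b/ε), ((1:ℝ) + x^2)⁻¹ :=
    intervalIntegral.integral_comp_div (f := fun y => ((1:ℝ) + y^2)⁻¹) hε.ne'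
  rw [h0]
  simp only [h1]
  rw [intervalIntegral.integral_const_mul, h2, integral_inv_one_add_sq]
  have h3 : Real.arctan (b/ε) < π/2 := Real.arctan_lt_pi_div_two _
  have h4 : (0:ℝ) ≤ Real.arctan (b/ε) := by simpa using Real.arctan_strictMono.monotone (by positivity : (0:ℝ) ≤ b/ε)
  simp only [smul_eq_mul, zero_div, Real.arctan_zero, sub_zero]
  have : 8 * ε⁻¹ * (ε * Real.arctan (b/ε)) = 8 * Real.arctan (b/ε) := by
    field_simp
  rw [this]
  nlinarith

lemma integrable_g {ε b : ℝ} (hε : 0 < ε) :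
    MeasureTheory.IntegrableOn (fun r : ℝ => 8 * ε / (ε^2 + r^2)) (Set.Ioo 0 b) := by
  have hc : Continuous fun r : ℝ => 8 * ε / (ε^2 + r^2) :=
    Continuous.div continuous_const (by continuity) (fun r => by positivity)
  exact (hc.integrableOn_Icc).mono_set Set.Ioo_subset_Icc_self

/-- the key integral estimate in the radial instability proof. -/
theorem key_integral_estimate :
    ∃ C > (0:ℝ),
      (∀ ε ∈ Set.Ioo (0:ℝ) 1,
        (∫ r in Set.Ioo (0:ℝ) 1,
          ε^6 * r^5 * ((ε^2 + r^2)^6)⁻¹ * (1 - Real.log (ε^2 + r^2) / Real.log (ε^2))^3)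
          ≤ C / (Real.log (1/ε^2))^3) ∧
      (∀ ε ∈ Set.Ioo (0:ℝ) 1,
        (∫ s in Set.Ioo (0:ℝ) (1/ε),
          s^5 * ((1 + s^2)^6)⁻¹ * (Real.log (1 + s^2))^3) ≤ C) := by
  refine ⟨4 * π, by positivity, fun ε hε => ?_, fun ε hε => ?_⟩
  · -- Part 1
    obtain ⟨hε0, hε1⟩ := hε
    set D := Real.log (1/ε^2) with hD_def
    have hD : 0 < D := Real.log_pos (by rw [lt_div_iff₀ (by positivity)]; nlinarith)
    have hcongr : (∫ r in Set.Ioo (0:ℝ) 1,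
          ε^6 * r^5 * ((ε^2 + r^2)^6)⁻¹ * (1 - Real.log (ε^2 + r^2) / Real.log (ε^2))^3)
        = ∫ r in Set.Ioo (0:ℝ) 1,
          (ε^6 * r^5 * ((ε^2 + r^2)^6)⁻¹ * (Real.log ((ε^2 + r^2)/ε^2))^3) * ((D^3)⁻¹) := by
      apply setIntegral_congr_fun measurableSet_Ioo
      intro r _
      have hlogε : Real.log (ε^2) < 0 := Real.log_neg (by positivity) (by nlinarith)
      have hlogε' : Real.log (ε^2) ≠ 0 := hlogε.ne
      have hdiv : Real.log ((ε^2 + r^2)/ε^2)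
          = Real.log (ε^2 + r^2) - Real.log (ε^2) :=
        Real.log_div (by positivity) (by positivity)
      have hD' : D = -Real.log (ε^2) := by rw [hD_def, one_div, Real.log_inv]
      have key : 1 - Real.log (ε^2+r^2) / Real.log (ε^2)
          = Real.log ((ε^2+r^2)/ε^2) / D := by
        have hlε : Real.log ε ≠ 0 := (Real.log_neg hε0 hε1).ne
        rw [hdiv, hD']
        field_simp
        ring
      simp only
      rw [key, div_pow]
      ring
    rw [hcongr, integral_mul_const]
    have hmono : (∫ r in Set.Ioo (0:ℝ) 1,
          ε^6 * r^5 * ((ε^2 + r^2)^6)⁻¹ * (Real.log ((ε^2 + r^2)/ε^2))^3) ≤ 4 * π := by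
      refine le_trans (MeasureTheory.integral_mono_of_nonneg ?_ (integrable_g hε0) ?_)
        (intbound hε0 zero_le_one)
      · filter_upwards [ae_restrict_mem measurableSet_Ioo] with r hr
        have hr0 : 0 < r := hr.1
        have hlog : 0 ≤ Real.log ((ε^2 + r^2)/ε^2) :=
          Real.log_nonneg (by rw [le_div_iff₀ (by positivity)]; nlinarith)
        have : (0:ℝ) ≤ ε^6 * r^5 * ((ε^2 + r^2)^6)⁻¹ := by positivity
        exact mul_nonneg this (by positivity)
      · filter_upwards [ae_restrict_mem measurableSet_Ioo] with r hr
        exact ptwise hε0 hr.1.le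
    calc (∫ r in Set.Ioo (0:ℝ) 1,
          ε^6 * r^5 * ((ε^2 + r^2)^6)⁻¹ * (Real.log ((ε^2 + r^2)/ε^2))^3) * (D^3)⁻¹
        ≤ (4 * π) * (D^3)⁻¹ := by
          apply mul_le_mul_of_nonneg_right hmono (by positivity)
      _ = 4 * π / D^3 := by rw [div_eq_mul_inv]
  · -- Part 2
    obtain ⟨hε0, _⟩ := hε
    refine le_trans (MeasureTheory.integral_mono_of_nonneg ?_
      (integrable_g (b := 1/ε) one_pos) ?_) ?_
    · filter_upwards [ae_restrict_mem measurableSet_Ioo] with s hs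
      have hlog : 0 ≤ Real.log (1 + s^2) := Real.log_nonneg (by nlinarith)
      have h1 : (0:ℝ) ≤ s^5 * ((1 + s^2)^6)⁻¹ := by
        have := hs.1
        positivity
      exact mul_nonneg h1 (by positivity)
    · filter_upwards [ae_restrict_mem measurableSet_Ioo] with s hs
      have := ptwise (ε := 1) (r := s) one_pos hs.1.le
      norm_num at this
      exact le_of_le_of_eq this (by norm_num)
    · exact intbound one_pos (by positivity)
end
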